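/- Let X be an integrable real random variable with distribution function F and quantile function F⁻¹(u) = inf{x : F(x) ≥ u}. Then for every p ∈ (0,1): ∫_p^1 F⁻¹(t) dt = inf_{t∈ℝ} { E[(X − t)₊] + t(1 − p) }, and the infimum is attained at any t with F(t) = p. -/

import Mathlib

/-! The quantile function `Q` of the law `ν` of `X` satisfies `Q u ≤ y ↔ u ≤ F y` on `(0, 1)`, so it
transports Lebesgue measure on `(0, 1)` to `ν` and `E[(X - t)₊] = ∫₀¹ (Q u - t)₊ du`. Pointwise,
`1_{u > p} Q u ≤ (Q u - t)₊ + t 1_{u > p}`, with equality when `Q ≤ t` on `(0, p]` and `t ≤ Q` on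
`(p, 1)`. Integrating over `(0, 1)` gives `∫_p^1 Q ≤ E[(X - t)₊] + t (1 - p)` for every `t`, with
equality at `t = Q p` (monotonicity of `Q`) and at every `t` with `F t = p` (the Galois
connection). -/

open MeasureTheory Set

lemma Set.Ioi_inter_Ioo_of_le {α : Type*} [LinearOrder α] {a b c : α} (h : b ≤ a) :
    Ioi a ∩ Ioo b c = Ioo a c := by
  ext x
  simp only [mem_inter_iff, mem_Ioi, mem_Ioo]
  exact ⟨fun ⟨hax, _, hxc⟩ ↦ ⟨hax, hxc⟩, fun ⟨hax, hxc⟩ ↦ ⟨hax, h.trans_lt hax, hxc⟩⟩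

lemma Real.volume_Iic_inter_Ioo {a b c : ℝ} (h : a ≤ c) :
    volume (Iic a ∩ Ioo b c) = ENNReal.ofReal (a - b) := by
  rw [← Measure.restrict_apply measurableSet_Iic, Measure.restrict_congr_set Ioo_ae_eq_Ioc,
    Measure.restrict_apply measurableSet_Iic, Iic_inter_Ioc_of_le h, Real.volume_Ioc]

section PosPart

variable {α : Type*} [MeasurableSpace α] {μ : Measure α} [IsFiniteMeasure μ] {f : α → ℝ}
  {s : Set α}

lemma integral_posPart_sub_add_mul_measureReal (hf : Integrable f μ) (hs : MeasurableSet s)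
    (t : ℝ) :
    ∫ x, max (f x - t) 0 ∂μ + t * μ.real s =
      ∫ x, (max (f x - t) 0 + s.indicator (fun _ ↦ t) x) ∂μ := by
  have hpos : Integrable (fun x ↦ max (f x - t) 0) μ := (hf.sub (integrable_const t)).pos_part
  rw [integral_add hpos ((integrable_const t).indicator hs), integral_indicator_const t hs,
    smul_eq_mul, mul_comm]

lemma setIntegral_le_integral_posPart_sub_add (hf : Integrable f μ) (hs : MeasurableSet s)
    (t : ℝ) : ∫ x in s, f x ∂μ ≤ ∫ x, max (f x - t) 0 ∂μ + t * μ.real s := by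
  rw [integral_posPart_sub_add_mul_measureReal hf hs, ← integral_indicator hs]
  refine integral_mono (hf.indicator hs)
    ((hf.sub (integrable_const t)).pos_part.add ((integrable_const t).indicator hs)) fun x ↦ ?_
  by_cases hx : x ∈ s
  · simp only [indicator_of_mem hx]
    linarith [le_max_left (f x - t) 0]
  · simp only [indicator_of_notMem hx, add_zero, le_max_right]

lemma setIntegral_eq_integral_posPart_sub_add (hf : Integrable f μ) (hs : MeasurableSet s)
    {t : ℝ} (h_mem : ∀ᵐ x ∂μ, x ∈ s → t ≤ f x) (h_notMem : ∀ᵐ x ∂μ, x ∉ s → f x ≤ t) :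
    ∫ x in s, f x ∂μ = ∫ x, max (f x - t) 0 ∂μ + t * μ.real s := by
  rw [integral_posPart_sub_add_mul_measureReal hf hs, ← integral_indicator hs]
  refine integral_congr_ae ?_
  filter_upwards [h_mem, h_notMem] with x hx_mem hx_notMem
  by_cases hx : x ∈ s
  · simp only [indicator_of_mem hx, max_eq_left (sub_nonneg.2 (hx_mem hx)), sub_add_cancel]
  · simp only [indicator_of_notMem hx, max_eq_right (sub_nonpos.2 (hx_notMem hx)), add_zero]

end PosPart

namespace ProbabilityTheory

lemma cdf_map {Ω : Type*} [MeasurableSpace Ω] {μ : Measure Ω}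
    [IsProbabilityMeasure μ] {X : Ω → ℝ} (hX : AEMeasurable X μ) (x : ℝ) :
    cdf (μ.map X) x = μ.real {ω | X ω ≤ x} := by
  have := Measure.isProbabilityMeasure_map hX
  rw [cdf_eq_real, map_measureReal_apply_of_aemeasurable hX measurableSet_Iic]
  rfl

/-- Only meaningful on `(0, 1)`: elsewhere the infimum is over an empty or unbounded set. -/
noncomputable def quantile (ν : Measure ℝ) (u : ℝ) : ℝ := sInf {x | u ≤ cdf ν x}

section Quantile

variable {ν : Measure ℝ} {u : ℝ}

lemma nonempty_setOf_le_cdf (hu : u < 1) : {x | u ≤ cdf ν x}.Nonempty :=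
  ((tendsto_cdf_atTop ν).eventually (eventually_ge_nhds hu)).exists

lemma bddBelow_setOf_le_cdf (hu : 0 < u) : BddBelow {x | u ≤ cdf ν x} := by
  obtain ⟨x₀, hx₀⟩ := ((tendsto_cdf_atBot ν).eventually (eventually_lt_nhds hu)).exists
  refine ⟨x₀, fun x hx ↦ le_of_not_gt fun hlt ↦ ?_⟩
  exact (hx.trans (monotone_cdf ν hlt.le)).not_gt hx₀

lemma le_cdf_quantile (hu : u ∈ Ioo 0 1) : u ≤ cdf ν (quantile ν u) := by
  refine ge_of_tendsto ((cdf ν).right_continuous _ |>.mono_left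
    (nhdsWithin_mono _ Ioi_subset_Ici_self)) ?_
  filter_upwards [self_mem_nhdsWithin] with x hx
  obtain ⟨y, hy, hyx⟩ := exists_lt_of_csInf_lt (nonempty_setOf_le_cdf hu.2) hx
  exact hy.trans (monotone_cdf ν hyx.le)

lemma quantile_le_iff (hu : u ∈ Ioo 0 1) {y : ℝ} : quantile ν u ≤ y ↔ u ≤ cdf ν y :=
  ⟨fun h ↦ (le_cdf_quantile hu).trans (monotone_cdf ν h),
    fun h ↦ csInf_le (bddBelow_setOf_le_cdf hu.1) h⟩

lemma monotoneOn_quantile : MonotoneOn (quantile ν) (Ioo 0 1) := fun _ hu _ hv huv ↦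
  (quantile_le_iff hu).2 (huv.trans (le_cdf_quantile hv))

lemma aemeasurable_quantile : AEMeasurable (quantile ν) (volume.restrict (Ioo 0 1)) :=
  aemeasurable_restrict_of_monotoneOn measurableSet_Ioo monotoneOn_quantile

variable (ν) in
lemma map_quantile [IsProbabilityMeasure ν] :
    (volume.restrict (Ioo 0 1)).map (quantile ν) = ν := by
  have : IsProbabilityMeasure (volume.restrict (Ioo (0 : ℝ) 1)) :=
    ⟨by rw [Measure.restrict_apply_univ, Real.volume_Ioo, sub_zero, ENNReal.ofReal_one]⟩
  refine Measure.ext_of_Iic _ _ fun y ↦ ?_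
  have hpre : quantile ν ⁻¹' Iic y ∩ Ioo 0 1 = Iic (cdf ν y) ∩ Ioo 0 1 := by
    ext u
    simp only [mem_inter_iff, mem_preimage, mem_Iic]
    exact and_congr_left fun hu ↦ quantile_le_iff hu
  rw [Measure.map_apply₀ aemeasurable_quantile measurableSet_Iic.nullMeasurableSet,
    Measure.restrict_apply' measurableSet_Ioo, hpre,
    Real.volume_Iic_inter_Ioo (cdf_le_one ν y), sub_zero, ofReal_cdf]

lemma integrableOn_quantile [IsProbabilityMeasure ν] (hν : Integrable id ν) :
    IntegrableOn (quantile ν) (Ioo 0 1) := by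
  rw [← map_quantile ν] at hν
  exact (integrable_map_measure aemeasurable_id.aestronglyMeasurable aemeasurable_quantile).1 hν

lemma setIntegral_comp_quantile [IsProbabilityMeasure ν] {E : Type*} [NormedAddCommGroup E]
    [NormedSpace ℝ E] {g : ℝ → E} (hg : AEStronglyMeasurable g ν) :
    ∫ u in Ioo 0 1, g (quantile ν u) = ∫ x, g x ∂ν := by
  rw [← map_quantile ν] at hg
  conv_rhs => rw [← map_quantile ν]
  exact (integral_map aemeasurable_quantile hg).symm

section StopLoss

variable [IsProbabilityMeasure ν] {p : ℝ}

lemma integral_posPart_quantile_sub (t : ℝ) :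
    ∫ u in Ioo 0 1, max (quantile ν u - t) 0 = ∫ x, max (x - t) 0 ∂ν :=
  setIntegral_comp_quantile (g := fun x ↦ max (x - t) 0) (by fun_prop)

lemma setIntegral_quantile_le (hν : Integrable id ν) (hp : p ∈ Ioo 0 1) (t : ℝ) :
    ∫ u in Ioo p 1, quantile ν u ≤ ∫ x, max (x - t) 0 ∂ν + t * (1 - p) := by
  have h := setIntegral_le_integral_posPart_sub_add (integrableOn_quantile hν)
    (measurableSet_Ioi (a := p)) t
  rwa [Measure.restrict_restrict measurableSet_Ioi, measureReal_restrict_apply measurableSet_Ioi,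
    Ioi_inter_Ioo_of_le hp.1.le, Real.volume_real_Ioo_of_le hp.2.le,
    integral_posPart_quantile_sub] at h

lemma setIntegral_quantile_eq (hν : Integrable id ν) (hp : p ∈ Ioo 0 1) {t : ℝ}
    (h_le : ∀ u ∈ Ioc 0 p, quantile ν u ≤ t) (h_ge : ∀ u ∈ Ioo p 1, t ≤ quantile ν u) :
    ∫ u in Ioo p 1, quantile ν u = ∫ x, max (x - t) 0 ∂ν + t * (1 - p) := by
  have h := setIntegral_eq_integral_posPart_sub_add (integrableOn_quantile hν)
    (measurableSet_Ioi (a := p)) (t := t)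
    (ae_restrict_of_forall_mem measurableSet_Ioo fun u hu hpu ↦ h_ge u ⟨hpu, hu.2⟩)
    (ae_restrict_of_forall_mem measurableSet_Ioo fun u hu hpu ↦ h_le u ⟨hu.1, not_lt.1 hpu⟩)
  rwa [Measure.restrict_restrict measurableSet_Ioi, measureReal_restrict_apply measurableSet_Ioi,
    Ioi_inter_Ioo_of_le hp.1.le, Real.volume_real_Ioo_of_le hp.2.le,
    integral_posPart_quantile_sub] at h

lemma setIntegral_quantile_eq_of_cdf_eq (hν : Integrable id ν) (hp : p ∈ Ioo 0 1) {t : ℝ}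
    (ht : cdf ν t = p) :
    ∫ u in Ioo p 1, quantile ν u = ∫ x, max (x - t) 0 ∂ν + t * (1 - p) :=
  setIntegral_quantile_eq hν hp
    (fun _ hu ↦ (quantile_le_iff ⟨hu.1, hu.2.trans_lt hp.2⟩).2 (ht ▸ hu.2))
    (fun _ hu ↦ le_of_not_ge fun h ↦ ((quantile_le_iff ⟨hp.1.trans hu.1, hu.2⟩).1 h).not_gt
      (ht ▸ hu.1))

lemma setIntegral_quantile_eq_iInf (hν : Integrable id ν) (hp : p ∈ Ioo 0 1) :
    ∫ u in Ioo p 1, quantile ν u = ⨅ t, ∫ x, max (x - t) 0 ∂ν + t * (1 - p) := by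
  refine (IsGLB.ciInf_eq (IsLeast.isGLB ⟨⟨quantile ν p, ?_⟩, ?_⟩)).symm
  · exact (setIntegral_quantile_eq hν hp
      (fun u hu ↦ monotoneOn_quantile ⟨hu.1, hu.2.trans_lt hp.2⟩ hp hu.2)
      (fun u hu ↦ monotoneOn_quantile hp ⟨hp.1.trans hu.1, hu.2⟩ hu.1.le)).symm
  · rintro _ ⟨t, rfl⟩
    exact setIntegral_quantile_le hν hp t

end StopLoss

end Quantile

end ProbabilityTheory

open ProbabilityTheory

/-- Legendre-duality identity linking upper quantile integrals to
stop-loss transforms: `∫_p^1 F⁻¹(t) dt = inf_t { E[(X − t)₊] + t(1 − p) }`,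
with the infimum attained at any `t` with `F(t) = p`. -/
theorem quantile_integral_eq_inf_stop_loss
    {Ω : Type*} [MeasurableSpace Ω] (μ : Measure Ω) [IsProbabilityMeasure μ]
    (X : Ω → ℝ) (hX : Integrable X μ)
    (F : ℝ → ℝ) (hF : ∀ x, F x = (μ {ω | X ω ≤ x}).toReal)
    (Finv : ℝ → ℝ) (hFinv : ∀ u, Finv u = sInf {x : ℝ | u ≤ F x})
    (p : ℝ) (hp : p ∈ Set.Ioo (0 : ℝ) 1) :
    (∫ t in p..1, Finv t) = (⨅ t : ℝ, ((∫ ω, max (X ω - t) 0 ∂μ) + t * (1 - p))) ∧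
      ∀ t : ℝ, F t = p →
        (∫ t in p..1, Finv t) = (∫ ω, max (X ω - t) 0 ∂μ) + t * (1 - p) := by
  have hXm := hX.aemeasurable
  have : IsProbabilityMeasure (μ.map X) := Measure.isProbabilityMeasure_map hXm
  obtain rfl : F = cdf (μ.map X) := funext fun x ↦ (hF x).trans (cdf_map hXm x).symm
  obtain rfl : Finv = quantile (μ.map X) := funext hFinv
  have hν : Integrable id (μ.map X) := (integrable_map_measure (by fun_prop) hXm).2 hX
  have h_stopLoss (t : ℝ) : ∫ ω, max (X ω - t) 0 ∂μ = ∫ x, max (x - t) 0 ∂μ.map X :=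
    (integral_map hXm
      (by fun_prop : Continuous fun x : ℝ ↦ max (x - t) 0).aestronglyMeasurable).symm
  simp only [h_stopLoss, intervalIntegral.integral_of_le hp.2.le, integral_Ioc_eq_integral_Ioo]
  exact ⟨setIntegral_quantile_eq_iInf hν hp, fun t ht ↦ setIntegral_quantile_eq_of_cdf_eq hν hp ht⟩
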